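/- arXiv:2011.05634 — 11 statements merged into one kernel-verified Lean document; each statement's English description precedes it below -/
import Mathlib

section
/- Let F be a field, let A and B be disjoint finite subsets of F with |A| = k − i and |B| = i for some 1 ≤ i ≤ k−1. Let f_0(x) = ∏_{a∈A}(x − a) and g_0(x) = ∏_{b∈B}(x − b). Then the k polynomials x^{i−1}f_0, x^{i−2}f_0, …, f_0, x^{k−i−1}g_0, …, g_0 (all of degree ≤ k−1) are linearly independent over F; moreover the determinant of the k×k matrix of their coefficients equals ∏_{a∈A, b∈B}(a − b) up to sign. -/
open Polynomial Finset

lemma aux_Ioi_split {M : Type*} [CommMonoid M] {a b : ℕ} (x0 : Fin (a+b)) (f : Fin (a+b) → M) :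
    ∏ y ∈ Finset.Ioi x0, f y =
    (∏ y : Fin a, if x0 < Fin.castAdd b y then f (Fin.castAdd b y) else 1) *
    ∏ y : Fin b, if x0 < Fin.natAdd a y then f (Fin.natAdd a y) else 1 := by
  rw [← Finset.filter_lt_eq_Ioi, Finset.prod_filter, Fin.prod_univ_add]

lemma aux_det_perm_sq {R : Type*} [CommRing R] {n : Type*} [DecidableEq n] [Fintype n]
    (σ : Equiv.Perm n) (W : Matrix n n R) :
    ((W.submatrix σ id).det)^2 = (W.det)^2 := by
  rw [Matrix.det_permute]
  rcases Int.units_eq_one_or (Equiv.Perm.sign σ) with h|h <;> simp [h]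

lemma aux_revvan {R : Type*} [CommRing R] {n : ℕ} (v : Fin n → R) :
    ((Matrix.of fun r s : Fin n => v s ^ (n - 1 - (r:ℕ))).det)^2 =
      (∏ x : Fin n, ∏ y ∈ Finset.Ioi x, (v y - v x))^2 := by
  rw [← Matrix.det_vandermonde v, ← Matrix.det_transpose (Matrix.vandermonde v),
    ← aux_det_perm_sq Fin.revPerm]
  congr 2
  ext r s
  simp [Matrix.vandermonde, Fin.val_rev]
  congr 1
  omega

lemma aux_van_split {R : Type*} [CommRing R] {a b : ℕ} (p : Fin a → R) (q : Fin b → R) :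
    ∏ x : Fin (a+b), ∏ y ∈ Finset.Ioi x, (Fin.append p q y - Fin.append p q x) =
    ((∏ x : Fin a, ∏ y ∈ Finset.Ioi x, (p y - p x)) *
     (∏ x : Fin b, ∏ y ∈ Finset.Ioi x, (q y - q x))) *
    ∏ x : Fin a, ∏ y : Fin b, (q y - p x) := by
  rw [Fin.prod_univ_add]
  have h1 : ∀ x : Fin a, ∏ y ∈ Finset.Ioi (Fin.castAdd b x),
      (Fin.append p q y - Fin.append p q (Fin.castAdd b x)) =
      (∏ y ∈ Finset.Ioi x, (p y - p x)) * ∏ y : Fin b, (q y - p x) := by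
    intro x
    rw [aux_Ioi_split]
    congr 1
    · rw [← Finset.filter_lt_eq_Ioi, Finset.prod_filter]
      apply Finset.prod_congr rfl
      intro y _
      have : Fin.castAdd b x < Fin.castAdd b y ↔ x < y := by
        simp only [Fin.lt_iff_val_lt_val, Fin.coe_castAdd, Fin.coe_natAdd]
      rw [if_congr this rfl rfl]
      simp [Fin.append_left]
    · apply Finset.prod_congr rfl
      intro y _
      have : Fin.castAdd b x < Fin.natAdd a y := by
        simp only [Fin.lt_iff_val_lt_val, Fin.coe_castAdd, Fin.coe_natAdd]; omega
      rw [if_pos this]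
      simp [Fin.append_left, Fin.append_right]
  have h2 : ∀ x : Fin b, ∏ y ∈ Finset.Ioi (Fin.natAdd a x),
      (Fin.append p q y - Fin.append p q (Fin.natAdd a x)) =
      ∏ y ∈ Finset.Ioi x, (q y - q x) := by
    intro x
    rw [aux_Ioi_split]
    have hz : ∀ y : Fin a, ¬ (Fin.natAdd a x < Fin.castAdd b y) := by
      intro y; simp only [Fin.lt_iff_val_lt_val, Fin.coe_castAdd, Fin.coe_natAdd]; omega
    rw [Finset.prod_congr rfl (fun y _ => if_neg (hz y)), Finset.prod_const_one, one_mul]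
    rw [← Finset.filter_lt_eq_Ioi, Finset.prod_filter]
    apply Finset.prod_congr rfl
    intro y _
    have : Fin.natAdd a x < Fin.natAdd a y ↔ x < y := by
      simp only [Fin.lt_iff_val_lt_val, Fin.coe_castAdd, Fin.coe_natAdd]; omega
    rw [if_congr this rfl rfl]
    simp [Fin.append_right]
  rw [Finset.prod_congr rfl (fun x _ => h1 x), Finset.prod_congr rfl (fun x _ => h2 x),
    Finset.prod_mul_distrib]
  ring

theorem stmt_2 {F : Type*} [Field F] (k i : ℕ) (hi : 1 ≤ i) (hik : i ≤ k - 1)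
    (A B : Finset F) (hAB : Disjoint A B) (hA : A.card = k - i) (hB : B.card = i) :
    let f0 : F[X] := ∏ a ∈ A, (X - C a)
    let g0 : F[X] := ∏ b ∈ B, (X - C b)
    let Q : Fin k → F[X] := fun j =>
      if (j : ℕ) < i then X ^ (i - 1 - (j : ℕ)) * f0 else X ^ (k - 1 - (j : ℕ)) * g0
    LinearIndependent F Q ∧
    ((Matrix.of fun r c : Fin k => (Q r).coeff (k - 1 - (c : ℕ))).det =
        ∏ a ∈ A, ∏ b ∈ B, (a - b) ∨
      (Matrix.of fun r c : Fin k => (Q r).coeff (k - 1 - (c : ℕ))).det =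
        -∏ a ∈ A, ∏ b ∈ B, (a - b)) := by
  intro f0 g0 Q
  have hklt : i < k := by omega
  set m : ℕ := k - i with hm
  have hkm : i + m = k := by omega
  have hm1 : 1 ≤ m := by omega
  -- enumerations
  let εB : Fin i ≃ {x // x ∈ B} := (finCongr hB.symm).trans B.equivFin.symm
  let eB : Fin i → F := fun j => (εB j : F)
  have heBmem : ∀ j, eB j ∈ B := fun j => (εB j).2
  have heBinj : Function.Injective eB := fun x y h => εB.injective (Subtype.ext h)
  have heBprod : ∀ h : F → F, ∏ j : Fin i, h (eB j) = ∏ x ∈ B, h x := by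
    intro h
    rw [← Finset.prod_coe_sort B h]
    exact Equiv.prod_comp εB (fun x => h (x : F))
  let εA : Fin m ≃ {x // x ∈ A} := (finCongr hA.symm).trans A.equivFin.symm
  let eA : Fin m → F := fun j => (εA j : F)
  have heAmem : ∀ j, eA j ∈ A := fun j => (εA j).2
  have heAinj : Function.Injective eA := fun x y h => εA.injective (Subtype.ext h)
  have heAprod : ∀ h : F → F, ∏ j : Fin m, h (eA j) = ∏ x ∈ A, h x := by
    intro h
    rw [← Finset.prod_coe_sort A h]
    exact Equiv.prod_comp εA (fun x => h (x : F))
  -- polynomial degrees and evaluations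
  have hf0monic : f0.Monic := monic_prod_of_monic _ _ fun a _ => monic_X_sub_C a
  have hg0monic : g0.Monic := monic_prod_of_monic _ _ fun b _ => monic_X_sub_C b
  have hf0deg : f0.natDegree = m := by
    rw [natDegree_prod_of_monic _ _ fun a _ => monic_X_sub_C a]
    simp [hA]
  have hg0deg : g0.natDegree = i := by
    rw [natDegree_prod_of_monic _ _ fun b _ => monic_X_sub_C b]
    simp [hB]
  have hf0eval : ∀ x : F, f0.eval x = ∏ a ∈ A, (x - a) := by
    intro x; simp [f0, eval_prod]
  have hg0eval : ∀ x : F, g0.eval x = ∏ b ∈ B, (x - b) := by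
    intro x; simp [g0, eval_prod]
  have hf0zero : ∀ a ∈ A, f0.eval a = 0 := by
    intro a ha; rw [hf0eval]; exact Finset.prod_eq_zero ha (by ring)
  have hg0zero : ∀ b ∈ B, g0.eval b = 0 := by
    intro b hb; rw [hg0eval]; exact Finset.prod_eq_zero hb (by ring)
  have hQdeg : ∀ r : Fin k, (Q r).natDegree < k := by
    intro r
    by_cases h : (r : ℕ) < i
    · simp only [Q, if_pos h]
      rw [natDegree_mul (pow_ne_zero _ X_ne_zero) hf0monic.ne_zero,
        natDegree_X_pow, hf0deg]
      omega
    · simp only [Q, if_neg h]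
      rw [natDegree_mul (pow_ne_zero _ X_ne_zero) hg0monic.ne_zero,
        natDegree_X_pow, hg0deg]
      omega
  set M : Matrix (Fin k) (Fin k) F :=
    Matrix.of fun r c : Fin k => (Q r).coeff (k - 1 - (c : ℕ)) with hMdef
  let σ : (Fin i ⊕ Fin m) ≃ Fin k := finSumFinEquiv.trans (finCongr hkm)
  have hσl : ∀ r : Fin i, ((σ (Sum.inl r) : Fin k) : ℕ) = (r : ℕ) := by
    intro r; simp [σ]
  have hσr : ∀ r : Fin m, ((σ (Sum.inr r) : Fin k) : ℕ) = i + (r : ℕ) := by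
    intro r; simp [σ]
  set N : Matrix (Fin i ⊕ Fin m) (Fin i ⊕ Fin m) F := M.submatrix σ σ with hNdef
  have hdetN : N.det = M.det := Matrix.det_submatrix_equiv_self σ M
  let w : Fin (i+m) → F := Fin.append eB eA
  set V : Matrix (Fin i ⊕ Fin m) (Fin i ⊕ Fin m) F :=
    Matrix.of fun c s => w (finSumFinEquiv s) ^ (k - 1 - ((σ c : Fin k) : ℕ)) with hVdef
  have hwl : ∀ s : Fin i, w (finSumFinEquiv (Sum.inl s)) = eB s := by
    intro s; simp [w, Fin.append_left]
  have hwr : ∀ s : Fin m, w (finSumFinEquiv (Sum.inr s)) = eA s := by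
    intro s; simp [w, Fin.append_right]
  -- evaluation identity
  have hEval : ∀ (r : Fin k) (x : F),
      (∑ c : Fin i ⊕ Fin m,
        (Q r).coeff (k - 1 - ((σ c : Fin k) : ℕ)) * x ^ (k - 1 - ((σ c : Fin k) : ℕ)))
        = (Q r).eval x := by
    intro r x
    rw [Equiv.sum_comp σ (fun c : Fin k => (Q r).coeff (k - 1 - (c : ℕ)) * x ^ (k - 1 - (c : ℕ)))]
    have hrev : ∀ c : Fin k, k - 1 - (c : ℕ) = ((Fin.rev c : Fin k) : ℕ) := by
      intro c; rw [Fin.val_rev]; omega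
    calc (∑ c : Fin k, (Q r).coeff (k - 1 - (c : ℕ)) * x ^ (k - 1 - (c : ℕ)))
        = ∑ c : Fin k, (Q r).coeff ((Fin.revPerm c : Fin k) : ℕ) * x ^ ((Fin.revPerm c : Fin k) : ℕ) := by
          apply Finset.sum_congr rfl
          intro c _
          rw [hrev c]; rfl
      _ = ∑ j : Fin k, (Q r).coeff (j : ℕ) * x ^ (j : ℕ) :=
          Equiv.sum_comp Fin.revPerm (fun j : Fin k => (Q r).coeff (j : ℕ) * x ^ (j : ℕ))
      _ = ∑ j ∈ Finset.range k, (Q r).coeff j * x ^ j :=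
          Fin.sum_univ_eq_sum_range (fun n => (Q r).coeff n * x ^ n) k
      _ = (Q r).eval x := (eval_eq_sum_range' (hQdeg r) x).symm
  set P : Matrix (Fin i) (Fin i) F :=
    Matrix.of fun r s : Fin i => eB s ^ (i - 1 - (r:ℕ)) * f0.eval (eB s) with hPdef
  set S : Matrix (Fin m) (Fin m) F :=
    Matrix.of fun r s : Fin m => eA s ^ (m - 1 - (r:ℕ)) * g0.eval (eA s) with hSdef
  have hNV : N * V = Matrix.fromBlocks P 0 0 S := by
    ext r s
    have hent : (N * V) r s = (Q (σ r)).eval (w (finSumFinEquiv s)) := by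
      rw [Matrix.mul_apply, ← hEval (σ r) (w (finSumFinEquiv s))]
      rfl
    rcases r with r | r <;> rcases s with s | s
    · rw [hent, hwl]
      have : Q (σ (Sum.inl r)) = X ^ (i - 1 - (r : ℕ)) * f0 := by
        simp only [Q, hσl r]
        rw [if_pos r.2]
      rw [this]
      simp [Matrix.fromBlocks, P]
    · rw [hent, hwr]
      have : Q (σ (Sum.inl r)) = X ^ (i - 1 - (r : ℕ)) * f0 := by
        simp only [Q, hσl r]
        rw [if_pos r.2]
      rw [this]
      simp [Matrix.fromBlocks, hf0zero _ (heAmem s)]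
    · rw [hent, hwl]
      have : Q (σ (Sum.inr r)) = X ^ (k - 1 - (i + (r : ℕ))) * g0 := by
        simp only [Q, hσr r]
        rw [if_neg (by omega)]
      rw [this]
      simp [Matrix.fromBlocks, hg0zero _ (heBmem s)]
    · rw [hent, hwr]
      have : Q (σ (Sum.inr r)) = X ^ (k - 1 - (i + (r : ℕ))) * g0 := by
        simp only [Q, hσr r]
        rw [if_neg (by omega)]
      rw [this]
      have hexp : k - 1 - (i + (r : ℕ)) = m - 1 - (r : ℕ) := by omega
      simp [Matrix.fromBlocks, S, hexp]
  -- determinant of V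
  set U : Matrix (Fin (i+m)) (Fin (i+m)) F :=
    Matrix.of fun c s : Fin (i+m) => w s ^ ((i+m) - 1 - (c:ℕ)) with hUdef
  have hVU : V = U.submatrix finSumFinEquiv finSumFinEquiv := by
    ext c s
    simp only [hVdef, Matrix.of_apply, Matrix.submatrix_apply, hUdef]
    have hc : ((σ c : Fin k) : ℕ) = ((finSumFinEquiv c : Fin (i+m)) : ℕ) := by
      rcases c with c | c
      · rw [hσl]; simp
      · rw [hσr]; simp
    rw [hc]
    congr 1
    omega
  have hdetV : V.det = U.det := by
    rw [hVU]; exact Matrix.det_submatrix_equiv_self _ _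
  have hU2 : U.det ^ 2 =
      ((∏ x : Fin i, ∏ y ∈ Finset.Ioi x, (eB y - eB x)) *
       (∏ x : Fin m, ∏ y ∈ Finset.Ioi x, (eA y - eA x)) *
       (∏ a ∈ A, ∏ b ∈ B, (a - b))) ^ 2 := by
    rw [hUdef, aux_revvan w]
    have hsplit := aux_van_split eB eA
    have hw : (∏ x : Fin (i+m), ∏ y ∈ Finset.Ioi x, (w y - w x)) =
        ∏ x : Fin (i+m), ∏ y ∈ Finset.Ioi x, (Fin.append eB eA y - Fin.append eB eA x) := rfl
    rw [hw, hsplit]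
    have hCR : (∏ x : Fin i, ∏ y : Fin m, (eA y - eB x)) = ∏ a ∈ A, ∏ b ∈ B, (a - b) := by
      calc ∏ x : Fin i, ∏ y : Fin m, (eA y - eB x)
          = ∏ x : Fin i, ∏ a ∈ A, (a - eB x) :=
            Finset.prod_congr rfl fun x _ => heAprod (fun a => a - eB x)
        _ = ∏ b ∈ B, ∏ a ∈ A, (a - b) := heBprod (fun b => ∏ a ∈ A, (a - b))
        _ = ∏ a ∈ A, ∏ b ∈ B, (a - b) := Finset.prod_comm
    rw [hCR]
  have hP2 : P.det ^ 2 =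
      (∏ x : Fin i, ∏ y ∈ Finset.Ioi x, (eB y - eB x)) ^ 2 *
      (∏ s : Fin i, f0.eval (eB s)) ^ 2 := by
    have hPm : P = (Matrix.of fun r s : Fin i => eB s ^ (i - 1 - (r:ℕ))) *
        Matrix.diagonal (fun s => f0.eval (eB s)) := by
      ext r s
      simp [hPdef, Matrix.mul_diagonal]
    rw [hPm, Matrix.det_mul, Matrix.det_diagonal, mul_pow, aux_revvan eB]
  have hS2 : S.det ^ 2 =
      (∏ x : Fin m, ∏ y ∈ Finset.Ioi x, (eA y - eA x)) ^ 2 *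
      (∏ s : Fin m, g0.eval (eA s)) ^ 2 := by
    have hSm : S = (Matrix.of fun r s : Fin m => eA s ^ (m - 1 - (r:ℕ))) *
        Matrix.diagonal (fun s => g0.eval (eA s)) := by
      ext r s
      simp [hSdef, Matrix.mul_diagonal]
    rw [hSm, Matrix.det_mul, Matrix.det_diagonal, mul_pow, aux_revvan eA]
  -- values of the diagonal products
  have hDB : (∏ s : Fin i, f0.eval (eB s)) = ∏ b ∈ B, ∏ a ∈ A, (b - a) := by
    rw [heBprod (fun x => f0.eval x)]
    exact Finset.prod_congr rfl fun b _ => hf0eval b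
  have hDA : (∏ s : Fin m, g0.eval (eA s)) = ∏ a ∈ A, ∏ b ∈ B, (a - b) := by
    rw [heAprod (fun x => g0.eval x)]
    exact Finset.prod_congr rfl fun a _ => hg0eval a
  have hD2 : (∏ b ∈ B, ∏ a ∈ A, (b - a)) ^ 2 = (∏ a ∈ A, ∏ b ∈ B, (a - b)) ^ 2 := by
    simp_rw [← Finset.prod_pow]
    rw [Finset.prod_comm]
    refine Finset.prod_congr rfl fun a _ => Finset.prod_congr rfl fun b _ => by ring
  -- nonvanishing
  have hCv : (∏ a ∈ A, ∏ b ∈ B, (a - b)) ≠ 0 := by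
    rw [Finset.prod_ne_zero_iff]
    intro a ha
    rw [Finset.prod_ne_zero_iff]
    intro b hb
    exact sub_ne_zero.mpr fun h => (Finset.disjoint_left.mp hAB ha) (h ▸ hb)
  have hVB : (∏ x : Fin i, ∏ y ∈ Finset.Ioi x, (eB y - eB x)) ≠ 0 := by
    rw [Finset.prod_ne_zero_iff]
    intro x _
    rw [Finset.prod_ne_zero_iff]
    intro y hy
    exact sub_ne_zero.mpr fun h => (Finset.mem_Ioi.mp hy).ne' (heBinj h)
  have hVA : (∏ x : Fin m, ∏ y ∈ Finset.Ioi x, (eA y - eA x)) ≠ 0 := by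
    rw [Finset.prod_ne_zero_iff]
    intro x _
    rw [Finset.prod_ne_zero_iff]
    intro y hy
    exact sub_ne_zero.mpr fun h => (Finset.mem_Ioi.mp hy).ne' (heAinj h)
  -- main determinant identity
  have hMV : M.det * V.det = P.det * S.det := by
    rw [← hdetN, ← Matrix.det_mul, hNV, Matrix.det_fromBlocks_zero₂₁]
  have hsq : M.det ^ 2 * V.det ^ 2 = P.det ^ 2 * S.det ^ 2 := by
    rw [← mul_pow, hMV, mul_pow]
  rw [hdetV, hU2, hP2, hS2, hDB, hDA, hD2] at hsq
  have hM2 : M.det ^ 2 = (∏ a ∈ A, ∏ b ∈ B, (a - b)) ^ 2 := by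
    have hnz : ((∏ x : Fin i, ∏ y ∈ Finset.Ioi x, (eB y - eB x)) *
        (∏ x : Fin m, ∏ y ∈ Finset.Ioi x, (eA y - eA x)) *
        (∏ a ∈ A, ∏ b ∈ B, (a - b))) ^ 2 ≠ 0 :=
      pow_ne_zero _ (mul_ne_zero (mul_ne_zero hVB hVA) hCv)
    apply mul_right_cancel₀ hnz
    rw [hsq]
    ring
  have hdisj : M.det = (∏ a ∈ A, ∏ b ∈ B, (a - b)) ∨
      M.det = -(∏ a ∈ A, ∏ b ∈ B, (a - b)) := by
    apply mul_self_eq_mul_self_iff.mp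
    rw [← sq, ← sq]
    exact hM2
  have hMne : M.det ≠ 0 := by
    rcases hdisj with h | h <;> rw [h] <;> simpa using hCv
  have hunit : IsUnit M := (Matrix.isUnit_iff_isUnit_det M).mpr (isUnit_iff_ne_zero.mpr hMne)
  have hrows : LinearIndependent F (fun r => M r) :=
    Matrix.linearIndependent_rows_iff_isUnit.mpr hunit
  refine ⟨?_, hdisj⟩
  let φ : F[X] →ₗ[F] (Fin k → F) := LinearMap.pi fun c : Fin k => lcoeff F (k - 1 - (c:ℕ))
  have hφQ : ⇑φ ∘ Q = fun r => M r := rfl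
  exact LinearIndependent.of_comp φ (by rw [hφQ]; exact hrows)
end

section
/- Let F be a field, A, B disjoint subsets of F with |A| = k−i, |B| = i. Suppose f_1,…,f_i are polynomials of degree ≤ i−1 that are linearly independent over F, and g_1,…,g_{k−i} are polynomials of degree ≤ k−i−1 that are linearly independent over F. Let f_0 = ∏_{a∈A}(x−a) and g_0 = ∏_{b∈B}(x−b). Then the k polynomials f_1·f_0, …, f_i·f_0, g_1·g_0, …, g_{k−i}·g_0 are linearly independent over F. -/
open Polynomial Finset

/-!
If `P * ∏_{a ∈ A} (X - a) = Q * ∏_{b ∈ B} (X - b)` with `A`, `B` disjoint, the two products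
are coprime, so `∏_{a ∈ A} (X - a)` divides `Q`; when `deg Q < |A|` this forces `Q = 0`.
Hence the spans of the two families meet only in `0`, and each family is independent on its
own because multiplication by a nonzero polynomial is injective.
-/

theorem LinearIndependent.mul_right {F R ι : Type*} [Field F] [Ring R] [NoZeroDivisors R]
    [Algebra F R] {v : ι → R} (hv : LinearIndependent F v) {p : R} (hp : p ≠ 0) :
    LinearIndependent F fun j => v j * p :=
  hv.map' (LinearMap.mulRight F p) (LinearMap.ker_eq_bot.2 (mul_left_injective₀ hp))

theorem Submodule.span_range_mul_right {F R ι : Type*} [Field F] [Ring R] [Algebra F R]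
    (v : ι → R) (p : R) :
    span F (Set.range fun j => v j * p) = (span F (Set.range v)).map (LinearMap.mulRight F p) := by
  rw [map_span, ← Set.range_comp]
  rfl

namespace Polynomial

variable {F : Type*} [Field F]

theorem degree_prod_X_sub_C (A : Finset F) :
    (∏ a ∈ A, (X - C a)).degree = (A.card : WithBot ℕ) := by
  simp [degree_prod]

theorem isCoprime_prod_X_sub_C_of_disjoint {A B : Finset F} (hAB : Disjoint A B) :
    IsCoprime (∏ a ∈ A, (X - C a)) (∏ b ∈ B, (X - C b)) :=
  IsCoprime.prod_left fun _ ha => IsCoprime.prod_right fun _ hb =>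
    isCoprime_X_sub_C_of_isUnit_sub
      (sub_ne_zero.2 (ne_of_mem_of_not_mem hb (disjoint_left.1 hAB ha)).symm).isUnit

theorem eq_zero_of_mul_prod_X_sub_C_eq {A B : Finset F} (hAB : Disjoint A B) {P Q : F[X]}
    (hQ : Q.degree < A.card) (h : P * ∏ a ∈ A, (X - C a) = Q * ∏ b ∈ B, (X - C b)) :
    Q = 0 := by
  have hdvd : (∏ a ∈ A, (X - C a)) ∣ Q :=
    (isCoprime_prod_X_sub_C_of_disjoint hAB).dvd_of_dvd_mul_right ⟨P, by rw [← h, mul_comm]⟩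
  exact eq_zero_of_dvd_of_degree_lt hdvd (by rwa [degree_prod_X_sub_C])

theorem disjoint_span_mul_prod_X_sub_C {ι κ : Type*} {A B : Finset F} (hAB : Disjoint A B)
    (f : ι → F[X]) (g : κ → F[X]) (hg : ∀ j, (g j).degree < A.card) :
    Disjoint (Submodule.span F (Set.range fun j => f j * ∏ a ∈ A, (X - C a)))
      (Submodule.span F (Set.range fun j => g j * ∏ b ∈ B, (X - C b))) := by
  rw [Submodule.disjoint_def, Submodule.span_range_mul_right, Submodule.span_range_mul_right]
  rintro _ hP hQ
  obtain ⟨P, -, rfl⟩ := hP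
  obtain ⟨Q, hQspan, hPQ⟩ := hQ
  have hQdeg : Q ∈ degreeLT F A.card :=
    Submodule.span_le.2 (Set.range_subset_iff.2 fun j => mem_degreeLT.2 (hg j)) hQspan
  rw [← hPQ, eq_zero_of_mul_prod_X_sub_C_eq hAB (mem_degreeLT.1 hQdeg) hPQ.symm, map_zero]

end Polynomial

theorem stmt_3_general {F : Type*} [Field F] (k i : ℕ) (hi : 1 ≤ i) (hik : i ≤ k - 1)
    (A B : Finset F) (hAB : Disjoint A B) (hA : A.card = k - i)
    (f : Fin i → F[X])
    (hfi : LinearIndependent F f)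
    (g : Fin (k - i) → F[X]) (hg : ∀ j, (g j).degree ≤ ((k - i - 1 : ℕ) : WithBot ℕ))
    (hgi : LinearIndependent F g) :
    LinearIndependent F
      (Sum.elim (fun j => f j * ∏ a ∈ A, (X - C a))
        (fun j => g j * ∏ b ∈ B, (X - C b))) := by
  have hg_lt : ∀ j, (g j).degree < A.card := fun j =>
    (hg j).trans_lt (by rw [hA]; exact_mod_cast (by omega : k - i - 1 < k - i))
  exact (hfi.mul_right (prod_ne_zero_iff.2 fun a _ => X_sub_C_ne_zero a)).sum_type
    (hgi.mul_right (prod_ne_zero_iff.2 fun b _ => X_sub_C_ne_zero b))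
    (disjoint_span_mul_prod_X_sub_C hAB f g hg_lt)

theorem stmt_3 {F : Type*} [Field F] (k i : ℕ) (hi : 1 ≤ i) (hik : i ≤ k - 1)
    (A B : Finset F) (hAB : Disjoint A B) (hA : A.card = k - i) (hB : B.card = i)
    (f : Fin i → F[X]) (hf : ∀ j, (f j).degree ≤ ((i - 1 : ℕ) : WithBot ℕ))
    (hfi : LinearIndependent F f)
    (g : Fin (k - i) → F[X]) (hg : ∀ j, (g j).degree ≤ ((k - i - 1 : ℕ) : WithBot ℕ))
    (hgi : LinearIndependent F g) :
    LinearIndependent F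
      (Sum.elim (fun j => f j * ∏ a ∈ A, (X - C a))
        (fun j => g j * ∏ b ∈ B, (X - C b))) :=
  stmt_3_general k i hi hik A B hAB hA f hfi g hg hgi
end

section
/- Suppose S_1,…,S_k ⊆ {1,…,n} with |S_i| = k−1 for all i, and the multiset of element occurrences is balanced: each j ∈ {1,…,n} lies in either ⌈k(k−1)/n⌉ or ⌊k(k−1)/n⌋ of the sets, with exactly k(k−1) mod⁺ n elements achieving the ceiling. If moreover there exists i ∈ {1,…,k−1} with |S_1∩⋯∩S_i| = k−i and |S_{i+1}∩⋯∩S_k| = i, then n ≤ 2k, and if n = 2k then k is even. -/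
set_option maxHeartbeats 800000


theorem stmt_6 (n k : ℕ) (hk : 3 ≤ k) (hkn : k ≤ n) (S : Fin k → Finset (Fin n))
    (hcard : ∀ i, (S i).card = k - 1)
    (hbal : ∀ j : Fin n,
      ((Finset.univ.filter fun i => j ∈ S i).card : ℤ) = ⌈((k:ℚ) * ((k:ℚ) - 1)) / n⌉ ∨
      ((Finset.univ.filter fun i => j ∈ S i).card : ℤ) = ⌊((k:ℚ) * ((k:ℚ) - 1)) / n⌋)
    (hmu : (Finset.univ.filter fun j : Fin n =>
        ((Finset.univ.filter fun i => j ∈ S i).card : ℤ) = ⌈((k:ℚ) * ((k:ℚ) - 1)) / n⌉).card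
        = (k * (k - 1) - 1) % n + 1)
    (hsep : ∃ i, 1 ≤ i ∧ i ≤ k - 1 ∧
      (Finset.univ.filter fun j : Fin n => ∀ l : Fin k, (l : ℕ) < i → j ∈ S l).card = k - i ∧
      (Finset.univ.filter fun j : Fin n => ∀ l : Fin k, i ≤ (l : ℕ) → j ∈ S l).card = i) :
    n ≤ 2 * k ∧ (n = 2 * k → Even k) := by
  obtain ⟨i, hi1, hik, hA, hB⟩ := hsep
  have hik' : i < k := by omega
  have hn0 : 0 < n := by omega
  have hnQ : (0:ℚ) < n := by exact_mod_cast hn0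
  set c : ℤ := ⌈((k:ℚ) * ((k:ℚ) - 1)) / n⌉ with hcdef
  set f : ℤ := ⌊((k:ℚ) * ((k:ℚ) - 1)) / n⌋ with hfdef
  set A := Finset.univ.filter fun j : Fin n => ∀ l : Fin k, (l : ℕ) < i → j ∈ S l with hAdef
  set B := Finset.univ.filter fun j : Fin n => ∀ l : Fin k, i ≤ (l : ℕ) → j ∈ S l with hBdef
  -- degree upper bound
  have degle : ∀ j : Fin n, ((Finset.univ.filter fun l => j ∈ S l).card : ℤ) ≤ c := by
    intro j
    rcases hbal j with h | h
    · rw [h]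
    · rw [h]; exact Int.floor_le_ceil _
  -- degree lower bounds on A and B
  have degA : ∀ j ∈ A, (i:ℤ) ≤ ((Finset.univ.filter fun l => j ∈ S l).card : ℤ) := by
    intro j hj
    rw [hAdef, Finset.mem_filter] at hj
    have hsub : Finset.univ.filter (fun l : Fin k => (l:ℕ) < i) ⊆
        Finset.univ.filter (fun l => j ∈ S l) := by
      intro l hl
      simp only [Finset.mem_filter, Finset.mem_univ, true_and] at hl ⊢
      exact hj.2 l hl
    have hcard1 : (Finset.univ.filter (fun l : Fin k => (l:ℕ) < i)).card = i := by
      have : Finset.univ.filter (fun l : Fin k => (l:ℕ) < i) = Finset.Iio ⟨i, hik'⟩ := by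
        ext l; simp [Fin.lt_def]
      rw [this, Fin.card_Iio]
    have := Finset.card_le_card hsub
    omega
  have degB : ∀ j ∈ B, ((k:ℤ) - i) ≤ ((Finset.univ.filter fun l => j ∈ S l).card : ℤ) := by
    intro j hj
    rw [hBdef, Finset.mem_filter] at hj
    have hsub : Finset.univ.filter (fun l : Fin k => i ≤ (l:ℕ)) ⊆
        Finset.univ.filter (fun l => j ∈ S l) := by
      intro l hl
      simp only [Finset.mem_filter, Finset.mem_univ, true_and] at hl ⊢
      exact hj.2 l hl
    have hcard1 : (Finset.univ.filter (fun l : Fin k => i ≤ (l:ℕ))).card = k - i := by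
      have : Finset.univ.filter (fun l : Fin k => i ≤ (l:ℕ)) = Finset.Ici ⟨i, hik'⟩ := by
        ext l; simp [Fin.le_def]
      rw [this, Fin.card_Ici]
    have := Finset.card_le_card hsub
    omega
  -- c ≥ i and c ≥ k - i
  have hAne : A.Nonempty := by
    rw [← Finset.card_pos, hA]; omega
  have hBne : B.Nonempty := by
    rw [← Finset.card_pos, hB]; omega
  have hci : (i:ℤ) ≤ c := by
    obtain ⟨a, ha⟩ := hAne
    exact le_trans (degA a ha) (degle a)
  have hcki : (k:ℤ) - i ≤ c := by
    obtain ⟨b, hb⟩ := hBne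
    exact le_trans (degB b hb) (degle b)
  -- the key contradiction
  have key : ∀ m : ℕ, 1 ≤ m → (k = 2*m + 1 ∧ 2*k ≤ n) ∨ (k = 2*m ∧ 2*k + 1 ≤ n) → False := by
    intro m hm hcase
    rcases hcase with ⟨hkm, hnk⟩ | ⟨hkm, hnk⟩
    · -- odd case: c ≤ m but max(i, k-i) ≥ m+1
      have hcle : c ≤ m := by
        rw [hcdef]
        apply Int.ceil_le.mpr
        rw [div_le_iff₀ hnQ]
        have h1 : (2*k:ℚ) ≤ n := by exact_mod_cast Nat.cast_le.mpr hnk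
        have h2 : (k:ℚ) = 2*m + 1 := by exact_mod_cast Nat.cast_inj.mpr hkm
        push_cast at h1 h2 ⊢
        nlinarith
      omega
    · -- even case
      have hxlt : ((k:ℚ) * ((k:ℚ) - 1)) / n < m := by
        rw [div_lt_iff₀ hnQ]
        have h1 : (2*k + 1:ℚ) ≤ n := by exact_mod_cast Nat.cast_le.mpr hnk
        have h2 : (k:ℚ) = 2*m := by exact_mod_cast Nat.cast_inj.mpr hkm
        have h3 : (1:ℚ) ≤ m := by exact_mod_cast Nat.one_le_cast.mpr hm
        push_cast at h1 ⊢
        nlinarith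
      have hcle : c ≤ m := by
        rw [hcdef]
        apply Int.ceil_le.mpr
        exact le_of_lt (by exact_mod_cast hxlt)
      have him : i = m := by omega
      have hceq : c = m := by omega
      have hflt : f < m := by
        rw [hfdef]
        exact_mod_cast Int.floor_lt.mpr (by exact_mod_cast hxlt)
      have hfge : c ≤ f + 1 := Int.ceil_le_floor_add_one _
      have hfeq : f = (m:ℤ) - 1 := by omega
      -- every element of A and B has degree exactly c
      have hdegc : ∀ j ∈ A ∪ B, ((Finset.univ.filter fun l => j ∈ S l).card : ℤ) = c := by
        intro j hj
        rcases Finset.mem_union.mp hj with hj | hj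
        · have := degA j hj
          have := degle j
          omega
        · have := degB j hj
          have := degle j
          omega
      -- A and B are disjoint
      have hdisj : Disjoint A B := by
        rw [Finset.disjoint_left]
        intro j hjA hjB
        rw [hAdef, Finset.mem_filter] at hjA
        rw [hBdef, Finset.mem_filter] at hjB
        have hall : Finset.univ.filter (fun l : Fin k => j ∈ S l) = Finset.univ := by
          apply Finset.filter_true_of_mem
          intro l _
          rcases lt_or_ge (l:ℕ) i with h | h
          · exact hjA.2 l h
          · exact hjB.2 l h
        have := degle j
        rw [hall] at this
        simp only [Finset.card_univ, Fintype.card_fin] at this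
        omega
      -- T = set of ceiling elements
      set T := Finset.univ.filter fun j : Fin n =>
        ((Finset.univ.filter fun l => j ∈ S l).card : ℤ) = c with hTdef
      have hTsub : A ∪ B ⊆ T := by
        intro j hj
        rw [hTdef, Finset.mem_filter]
        exact ⟨Finset.mem_univ _, hdegc j hj⟩
      have hTge : 2*m ≤ T.card := by
        have := Finset.card_le_card hTsub
        rw [Finset.card_union_of_disjoint hdisj, hA, hB] at this
        omega
      have hTle : T.card ≤ n := by
        rw [hTdef]
        simpa using Finset.card_filter_le Finset.univ
          (fun j : Fin n => ((Finset.univ.filter fun l => j ∈ S l).card : ℤ) = c)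
      -- total degree sum
      have hsum : ∑ j : Fin n, ((Finset.univ.filter fun l => j ∈ S l).card : ℤ)
          = (k:ℤ) * ((k:ℤ) - 1) := by
        have h1 : ∑ j : Fin n, (Finset.univ.filter fun l => j ∈ S l).card
            = ∑ l : Fin k, (S l).card := by
          simp only [Finset.card_filter]
          rw [Finset.sum_comm]
          congr 1
          ext l
          rw [← Finset.card_filter]
          congr 1
          exact Finset.filter_univ_mem (S l)
        have h2 : ∑ l : Fin k, (S l).card = k * (k - 1) := by
          simp [hcard, Finset.sum_const, Finset.card_univ]
        rw [← Nat.cast_sum, h1, h2]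
        push_cast [Nat.cast_sub (show 1 ≤ k by omega)]
        ring
      have e1 : ∑ j ∈ Finset.univ.filter (fun j : Fin n =>
          ((Finset.univ.filter fun l => j ∈ S l).card : ℤ) = c),
          ((Finset.univ.filter fun l => j ∈ S l).card : ℤ) = (T.card : ℤ) * c := by
        rw [Finset.sum_congr rfl (fun j hj => (Finset.mem_filter.mp hj).2),
          Finset.sum_const, nsmul_eq_mul]
      have e2 : ∑ j ∈ Finset.univ.filter (fun j : Fin n =>
          ¬((Finset.univ.filter fun l => j ∈ S l).card : ℤ) = c),
          ((Finset.univ.filter fun l => j ∈ S l).card : ℤ) = ((n:ℤ) - T.card) * f := by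
        have hf' : ∀ j ∈ Finset.univ.filter (fun j : Fin n =>
            ¬((Finset.univ.filter fun l => j ∈ S l).card : ℤ) = c),
            ((Finset.univ.filter fun l => j ∈ S l).card : ℤ) = f := by
          intro j hj
          rw [Finset.mem_filter] at hj
          rcases hbal j with h | h
          · exact absurd h hj.2
          · exact h
        rw [Finset.sum_congr rfl hf', Finset.sum_const, nsmul_eq_mul]
        have hcn : (Finset.univ.filter (fun j : Fin n =>
            ¬((Finset.univ.filter fun l => j ∈ S l).card : ℤ) = c)).card = n - T.card := by
          rw [Finset.filter_not, Finset.card_sdiff_of_subset (Finset.filter_subset _ _),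
            Finset.card_univ, Fintype.card_fin]
        rw [hcn]
        push_cast [Nat.cast_sub hTle]
        ring
      have hsplit := Finset.sum_filter_add_sum_filter_not Finset.univ
        (fun j : Fin n => ((Finset.univ.filter fun l => j ∈ S l).card : ℤ) = c)
        (fun j : Fin n => ((Finset.univ.filter fun l => j ∈ S l).card : ℤ))
      rw [e1, e2, hsum] at hsplit
      -- now derive the contradiction by arithmetic
      have hkZ : (k:ℤ) = 2*m := by exact_mod_cast Nat.cast_inj.mpr hkm
      have hnZ : (2*(k:ℤ) + 1) ≤ n := by exact_mod_cast Nat.cast_le.mpr hnk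
      have hTgeZ : (2*(m:ℤ)) ≤ T.card := by exact_mod_cast Nat.cast_le.mpr hTge
      have hTleZ : (T.card:ℤ) ≤ n := by exact_mod_cast Nat.cast_le.mpr hTle
      have hm2 : 2 ≤ m := by omega
      have hmZ : (2:ℤ) ≤ m := by exact_mod_cast Nat.cast_le.mpr hm2
      rw [hceq, hfeq] at hsplit
      nlinarith [hsplit.symm, hnZ, hTgeZ, hTleZ, hmZ]
  -- conclude
  constructor
  · by_contra hcon
    push_neg at hcon
    rcases Nat.even_or_odd k with ⟨m, hm⟩ | ⟨m, hm⟩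
    · exact key m (by omega) (Or.inr ⟨by omega, by omega⟩)
    · exact key m (by omega) (Or.inl ⟨by omega, by omega⟩)
  · intro hn2k
    by_contra hodd
    rw [Nat.not_even_iff_odd] at hodd
    obtain ⟨m, hm⟩ := hodd
    exact key m (by omega) (Or.inl ⟨by omega, by omega⟩)
end

section
/- Let k ≥ 4 be even and n = 2k. Define S_i = [i, i+k−2] for 1 ≤ i ≤ k/2 and S_i = [k/2+i, 3k/2+i−2] mod⁺ n for k/2+1 ≤ i ≤ k. Then for every j ∈ {1,…,2k}, the number of indices i with j ∈ S_i equals k/2 if j ∈ [k/2, k−1] ∪ [3k/2, 2k−1], and equals k/2 − 1 otherwise. -/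
/-- `a mod⁺ n`: the unique representative of `a` modulo `n` in `{1, …, n}`. -/
def modp (n a : ℕ) : ℕ := (a - 1) % n + 1

/-- Construction 1: the set system for `n = 2k`. -/
def con1 (k i : ℕ) : Finset ℕ :=
  if i ≤ k / 2 then Finset.Icc i (i + k - 2)
  else (Finset.Icc (k / 2 + i) (3 * k / 2 + i - 2)).image (modp (2 * k))

lemma card_filter_Icc (a b l u : ℕ) :
    ((Finset.Icc a b).filter fun i => l ≤ i ∧ i ≤ u).card = min b u + 1 - max a l := by
  have h : (Finset.Icc a b).filter (fun i => l ≤ i ∧ i ≤ u) = Finset.Icc (max a l) (min b u) := by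
    ext i
    simp only [Finset.mem_filter, Finset.mem_Icc]
    omega
  rw [h, Nat.card_Icc]

lemma mem_con1_high (m i j : ℕ) (hm : 2 ≤ m) (hi1 : m + 1 ≤ i) (hi2 : i ≤ 2 * m)
    (hj1 : 1 ≤ j) (hj2 : j ≤ 4 * m) :
    j ∈ con1 (2 * m) i ↔ (m + i ≤ j ∧ j + 2 ≤ 3 * m + i) ∨ (j + m + 2 ≤ i) := by
  have hk2 : (2 * m) / 2 = m := by omega
  have hk32 : 3 * (2 * m) / 2 = 3 * m := by omega
  rw [con1, if_neg (by omega), hk2, hk32]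
  simp only [Finset.mem_image, Finset.mem_Icc, modp]
  constructor
  · rintro ⟨a, ⟨ha1, ha2⟩, ha3⟩
    have haub : a - 1 < 2 * (2 * (2 * m)) := by omega
    rcases lt_or_ge (a - 1) (2 * (2 * m)) with h | h
    · rw [Nat.mod_eq_of_lt h] at ha3
      omega
    · rw [Nat.mod_eq_sub_mod h, Nat.mod_eq_of_lt (by omega)] at ha3
      omega
  · rintro (⟨h1, h2⟩ | h)
    · refine ⟨j, ⟨by omega, by omega⟩, ?_⟩
      rw [Nat.mod_eq_of_lt (by omega)]; omega
    · refine ⟨j + 4 * m, ⟨by omega, by omega⟩, ?_⟩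
      rw [Nat.mod_eq_sub_mod (by omega), Nat.mod_eq_of_lt (by omega)]; omega

theorem stmt_7 (k : ℕ) (hk : 4 ≤ k) (hke : Even k) :
    ∀ j ∈ Finset.Icc 1 (2 * k),
      ((Finset.Icc 1 k).filter fun i => j ∈ con1 k i).card =
        if j ∈ Finset.Icc (k / 2) (k - 1) ∪ Finset.Icc (3 * k / 2) (2 * k - 1)
        then k / 2 else k / 2 - 1 := by
  obtain ⟨m, rfl⟩ : ∃ m, k = 2 * m := by obtain ⟨m, rfl⟩ := hke; exact ⟨m, by ring⟩
  have hm : 2 ≤ m := by omega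
  intro j hj
  rw [Finset.mem_Icc] at hj
  have hk2 : (2 * m) / 2 = m := by omega
  have hk32 : 3 * (2 * m) / 2 = 3 * m := by omega
  -- split the index interval
  have hsplit : Finset.Icc 1 (2 * m) = Finset.Icc 1 m ∪ Finset.Icc (m + 1) (2 * m) := by
    ext i; simp only [Finset.mem_union, Finset.mem_Icc]; omega
  rw [hsplit, Finset.filter_union, Finset.card_union_of_disjoint (by
    apply Finset.disjoint_filter_filter
    simp only [Finset.disjoint_left, Finset.mem_Icc]
    omega)]
  -- low part
  have hlow : (Finset.Icc 1 m).filter (fun i => j ∈ con1 (2 * m) i) =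
      (Finset.Icc 1 m).filter (fun i => i ≤ j ∧ j + 2 ≤ i + 2 * m) := by
    apply Finset.filter_congr
    intro i hi
    rw [Finset.mem_Icc] at hi
    rw [con1, if_pos (by omega), Finset.mem_Icc]
    constructor <;> intro h <;> omega
  have hlow2 : (Finset.Icc 1 m).filter (fun i => i ≤ j ∧ j + 2 ≤ i + 2 * m) =
      (Finset.Icc 1 m).filter (fun i => (j + 2 - 2 * m) ≤ i ∧ i ≤ j) := by
    apply Finset.filter_congr
    intro i _
    constructor <;> intro h <;> omega
  -- high part
  have hhigh : (Finset.Icc (m + 1) (2 * m)).filter (fun i => j ∈ con1 (2 * m) i) =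
      (Finset.Icc (m + 1) (2 * m)).filter (fun i => (j + 2 - 3 * m) ≤ i ∧ i ≤ j - m) ∪
      (Finset.Icc (m + 1) (2 * m)).filter (fun i => (j + m + 2) ≤ i ∧ i ≤ 2 * m) := by
    rw [← Finset.filter_or]
    apply Finset.filter_congr
    intro i hi
    rw [Finset.mem_Icc] at hi
    rw [mem_con1_high m i j hm hi.1 hi.2 hj.1 (by omega)]
    constructor <;> intro h <;> omega
  have hd : Disjoint
      ((Finset.Icc (m + 1) (2 * m)).filter fun i => (j + 2 - 3 * m) ≤ i ∧ i ≤ j - m)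
      ((Finset.Icc (m + 1) (2 * m)).filter fun i => (j + m + 2) ≤ i ∧ i ≤ 2 * m) := by
    simp only [Finset.disjoint_left, Finset.mem_filter, Finset.mem_Icc]
    omega
  rw [hlow, hlow2, card_filter_Icc, hhigh, Finset.card_union_of_disjoint hd,
    card_filter_Icc, card_filter_Icc]
  rw [hk2, hk32]
  by_cases hc : j ∈ Finset.Icc m (2 * m - 1) ∪ Finset.Icc (3 * m) (2 * (2 * m) - 1)
  · rw [if_pos hc]
    simp only [Finset.mem_union, Finset.mem_Icc] at hc
    omega
  · rw [if_neg hc]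
    simp only [Finset.mem_union, Finset.mem_Icc, not_or, not_and] at hc
    omega
end

section
/- Let k ≥ 4 be even and n = 2k, and define S_i as in Construction 1 (S_i = [i, i+k−2] for i ≤ k/2, S_i = [k/2+i, 3k/2+i−2] mod⁺ n for i > k/2). Then |S_1 ∩ S_2 ∩ ⋯ ∩ S_{k/2}| = k/2 and |S_{k/2+1} ∩ ⋯ ∩ S_k| = k/2, and S_1 ∩ S_2 ∩ ⋯ ∩ S_k = ∅. -/
lemma modp_eq (n a : ℕ) (h1 : 1 ≤ a) (h2 : a ≤ 2 * n) :
    modp n a = if a ≤ n then a else a - n := by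
  unfold modp
  split
  · rw [Nat.mod_eq_of_lt (by omega)]; omega
  · rw [Nat.mod_eq_sub_mod (by omega), Nat.mod_eq_of_lt (by omega)]; omega

open Classical in
theorem stmt_8 (k : ℕ) (hk : 4 ≤ k) (hke : Even k) :
    ((Finset.Icc 1 (2 * k)).filter fun j => ∀ i ∈ Finset.Icc 1 (k / 2), j ∈ con1 k i).card
      = k / 2 ∧
    ((Finset.Icc 1 (2 * k)).filter fun j => ∀ i ∈ Finset.Icc (k / 2 + 1) k, j ∈ con1 k i).card
      = k / 2 ∧
    ((Finset.Icc 1 (2 * k)).filter fun j => ∀ i ∈ Finset.Icc 1 k, j ∈ con1 k i) = ∅ := by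
  obtain ⟨m, hm⟩ := hke
  have hm2 : 2 ≤ m := by omega
  have e1 : k / 2 = m := by omega
  have e2 : 3 * k / 2 = 3 * m := by omega
  have hA : (@Finset.filter ℕ (fun j => ∀ i ∈ Finset.Icc 1 (k / 2), j ∈ con1 k i)
      (fun j => Classical.propDecidable _) (Finset.Icc 1 (2 * k)))
      = Finset.Icc m (2 * m - 1) := by
    ext j
    simp only [Finset.mem_filter, Finset.mem_Icc]
    constructor
    · rintro ⟨hj, h⟩
      have h1 := h 1 (by omega)
      have h2 := h m (by omega)
      rw [con1, if_pos (by omega), Finset.mem_Icc] at h1 h2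
      omega
    · intro hj
      refine ⟨⟨by omega, by omega⟩, ?_⟩
      intro i hi
      rw [con1, if_pos (by omega), Finset.mem_Icc]
      omega
  have hB : (@Finset.filter ℕ (fun j => ∀ i ∈ Finset.Icc (k / 2 + 1) k, j ∈ con1 k i)
      (fun j => Classical.propDecidable _) (Finset.Icc 1 (2 * k)))
      = Finset.Icc (3 * m) (4 * m - 1) := by
    ext j
    simp only [Finset.mem_filter, Finset.mem_Icc]
    constructor
    · rintro ⟨hj, h⟩
      have h1 := h (m + 1) (by omega)
      have h2 := h k (by omega)
      rw [con1, if_neg (by omega), Finset.mem_image] at h1 h2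
      obtain ⟨x, hx, hxj⟩ := h1
      obtain ⟨y, hy, hyj⟩ := h2
      rw [Finset.mem_Icc, e1, e2] at hx hy
      rw [modp_eq _ _ (by omega) (by omega)] at hxj hyj
      split at hxj <;> split at hyj <;> omega
    · intro hj
      refine ⟨⟨by omega, by omega⟩, ?_⟩
      intro i hi
      rw [con1, if_neg (by omega), Finset.mem_image]
      refine ⟨j, ?_, ?_⟩
      · rw [Finset.mem_Icc, e1, e2]; omega
      · rw [modp_eq _ _ (by omega) (by omega)]
        split <;> omega
  have hC : (@Finset.filter ℕ (fun j => ∀ i ∈ Finset.Icc 1 k, j ∈ con1 k i)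
      (fun j => Classical.propDecidable _) (Finset.Icc 1 (2 * k))) = ∅ := by
    rw [Finset.eq_empty_iff_forall_notMem]
    intro j hj
    simp only [Finset.mem_filter] at hj
    obtain ⟨hj1, h⟩ := hj
    have hA' : j ∈ Finset.Icc m (2 * m - 1) := by
      rw [← hA]; simp only [Finset.mem_filter]
      exact ⟨hj1, fun i hi => h i (by rw [Finset.mem_Icc] at hi ⊢; omega)⟩
    have hB' : j ∈ Finset.Icc (3 * m) (4 * m - 1) := by
      rw [← hB]; simp only [Finset.mem_filter]
      exact ⟨hj1, fun i hi => h i (by rw [Finset.mem_Icc] at hi ⊢; omega)⟩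
    rw [Finset.mem_Icc] at hA' hB'
    omega
  refine ⟨?_, ?_, hC⟩
  · rw [hA, Nat.card_Icc]; omega
  · rw [hB, Nat.card_Icc]; omega
end

section
/- Let k ≥ 4 be even and n = 2k − 2. Define S_i = [i, i+k−2] for 1 ≤ i ≤ k/2 and S_i = [1, i − k/2 − 1] ∪ [k/2 + i − 1, 2k−2] for k/2+1 ≤ i ≤ k. Then each |S_i| = k−1 and every element of {1,…,n} lies in exactly k/2 of the sets S_i. -/
/-- The set system of Construction 3 (`n = 2k - 2`). -/
def con3 (k i : ℕ) : Finset ℕ :=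
  if i ≤ k / 2 then Finset.Icc i (i + k - 2)
  else Finset.Icc 1 (i - k / 2 - 1) ∪ Finset.Icc (k / 2 + i - 1) (2 * k - 2)

theorem stmt_10 (k : ℕ) (hk : 4 ≤ k) (hke : Even k) :
    (∀ i ∈ Finset.Icc 1 k, (con3 k i).card = k - 1) ∧
    (∀ j ∈ Finset.Icc 1 (2 * k - 2),
      ((Finset.Icc 1 k).filter fun i => j ∈ con3 k i).card = k / 2) := by
  obtain ⟨m, hm'⟩ := hke
  obtain rfl : k = 2 * m := by omega
  have hm : 2 ≤ m := by omega
  have hdiv : 2 * m / 2 = m := by omega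
  constructor
  · intro i hi
    simp only [Finset.mem_Icc] at hi
    unfold con3
    rw [hdiv]
    split_ifs with h
    · rw [Nat.card_Icc]; omega
    · rw [Finset.card_union_of_disjoint, Nat.card_Icc, Nat.card_Icc]
      · omega
      · rw [Finset.disjoint_left]
        intro a ha hb
        simp only [Finset.mem_Icc] at ha hb
        omega
  · intro j hj
    simp only [Finset.mem_Icc] at hj
    by_cases h1 : j ≤ m
    · have heq : (Finset.Icc 1 (2 * m)).filter (fun i => j ∈ con3 (2 * m) i)
          = Finset.Icc 1 j ∪ Finset.Icc (j + m + 1) (2 * m) := by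
        ext i
        simp only [Finset.mem_filter, Finset.mem_Icc, Finset.mem_union, con3, hdiv]
        split_ifs with h <;>
          simp only [Finset.mem_Icc, Finset.mem_union] <;> omega
      rw [heq, Finset.card_union_of_disjoint, Nat.card_Icc, Nat.card_Icc]
      · omega
      · rw [Finset.disjoint_left]
        intro a ha hb
        simp only [Finset.mem_Icc] at ha hb
        omega
    · by_cases h2 : j ≤ 2 * m - 1
      · have heq : (Finset.Icc 1 (2 * m)).filter (fun i => j ∈ con3 (2 * m) i)
            = Finset.Icc 1 m := by
          ext i
          simp only [Finset.mem_filter, Finset.mem_Icc, Finset.mem_union, con3, hdiv]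
          split_ifs with h <;>
            simp only [Finset.mem_Icc, Finset.mem_union] <;> omega
        rw [heq, Nat.card_Icc]; omega
      · by_cases h3 : j ≤ 3 * m - 1
        · have heq : (Finset.Icc 1 (2 * m)).filter (fun i => j ∈ con3 (2 * m) i)
              = Finset.Icc (j - 2 * m + 2) m ∪ Finset.Icc (m + 1) (j - m + 1) := by
            ext i
            simp only [Finset.mem_filter, Finset.mem_Icc, Finset.mem_union, con3, hdiv]
            split_ifs with h <;>
              simp only [Finset.mem_Icc, Finset.mem_union] <;> omega
          rw [heq, Finset.card_union_of_disjoint, Nat.card_Icc, Nat.card_Icc]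
          · omega
          · rw [Finset.disjoint_left]
            intro a ha hb
            simp only [Finset.mem_Icc] at ha hb
            omega
        · have heq : (Finset.Icc 1 (2 * m)).filter (fun i => j ∈ con3 (2 * m) i)
              = Finset.Icc (m + 1) (2 * m) := by
            ext i
            simp only [Finset.mem_filter, Finset.mem_Icc, Finset.mem_union, con3, hdiv]
            split_ifs with h <;>
              simp only [Finset.mem_Icc, Finset.mem_union] <;> omega
          rw [heq, Nat.card_Icc]; omega
end

section
/- For any n ≥ k ≥ 2, the sets S_i = [i, i+k−2] mod⁺ n for i = 1,…,k satisfy: S_1 ∩ S_2 ∩ ⋯ ∩ S_j = [j, k−1] for every 1 ≤ j ≤ k−1 (in particular |∩_{i≤j} S_i| = k − j), and the corresponding polynomials P_{S_1},…,P_{S_k} built from any n distinct field elements are linearly independent. -/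
open Polynomial

/-- The cyclic-interval set `[i, i + k - 2] mod⁺ n`. -/
def cyc (n k i : ℕ) : Finset ℕ := (Finset.Icc i (i + k - 2)).image (modp n)

lemma cyc_subset (n k i : ℕ) (hn : 1 ≤ n) : cyc n k i ⊆ Finset.Icc 1 n := by
  intro x hx
  obtain ⟨t, _, rfl⟩ := Finset.mem_image.1 hx
  have := Nat.mod_lt (t - 1) (show 0 < n by omega)
  simp only [modp, Finset.mem_Icc]
  omega

lemma mem_cyc_self (n k i x : ℕ) (hx0 : 1 ≤ x) (hx1 : i ≤ x) (hx2 : x ≤ i + k - 2)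
    (hxn : x ≤ n) : x ∈ cyc n k i := by
  refine Finset.mem_image.2 ⟨x, Finset.mem_Icc.2 ⟨hx1, hx2⟩, ?_⟩
  unfold modp
  rw [Nat.mod_eq_of_lt (by omega)]
  omega

lemma not_mem_cyc (n k x : ℕ) (hk : k ≤ n) (hx : 1 ≤ x) : x ∉ cyc n k (x + 1) := by
  intro h
  obtain ⟨t, ht, hmod⟩ := Finset.mem_image.1 h
  rw [Finset.mem_Icc] at ht
  unfold modp at hmod
  have hdm := Nat.div_add_mod (t - 1) n
  have h1 : (t - 1) % n = x - 1 := by omega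
  rcases Nat.eq_zero_or_pos ((t - 1) / n) with hq | hq
  · rw [hq, mul_zero] at hdm
    omega
  · have : n ≤ n * ((t - 1) / n) := Nat.le_mul_of_pos_right n hq
    omega

lemma mem_cyc_one (n k x : ℕ) (h : x ∈ cyc n k 1) : x ≤ k - 1 := by
  obtain ⟨t, ht, rfl⟩ := Finset.mem_image.1 h
  rw [Finset.mem_Icc] at ht
  have := Nat.mod_le (t - 1) n
  simp only [modp]
  omega

open Classical in
theorem stmt_11 {F : Type*} [Field F] (n k : ℕ) (hk : 2 ≤ k) (hkn : k ≤ n)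
    (a : ℕ → F) (ha : Set.InjOn a (Set.Icc 1 n)) :
    (∀ j, 1 ≤ j → j ≤ k - 1 →
      ((Finset.Icc 1 n).filter fun x => ∀ i ∈ Finset.Icc 1 j, x ∈ cyc n k i)
        = Finset.Icc j (k - 1) ∧
      ((Finset.Icc 1 n).filter fun x => ∀ i ∈ Finset.Icc 1 j, x ∈ cyc n k i).card = k - j) ∧
    LinearIndependent F (fun i : Fin k => ∏ j ∈ cyc n k ((i : ℕ) + 1), (X - C (a j))) := by
  have hn : 1 ≤ n := by omega
  constructor
  · intro j hj1 hj2
    have hset : ((Finset.Icc 1 n).filter fun x => ∀ i ∈ Finset.Icc 1 j, x ∈ cyc n k i)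
        = Finset.Icc j (k - 1) := by
      ext x
      simp only [Finset.mem_filter, Finset.mem_Icc]
      constructor
      · rintro ⟨⟨hx1, hxn⟩, hall⟩
        refine ⟨?_, mem_cyc_one n k x (hall 1 ⟨le_rfl, hj1⟩)⟩
        by_contra hlt
        push_neg at hlt
        exact not_mem_cyc n k x hkn hx1
          (hall (x + 1) ⟨by omega, by omega⟩)
      · rintro ⟨hjx, hxk⟩
        refine ⟨⟨by omega, by omega⟩, fun i hi => ?_⟩
        obtain ⟨hi1, hi2⟩ := hi
        exact mem_cyc_self n k i x (by omega) (by omega) (by omega) (by omega)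
    refine ⟨hset, ?_⟩
    rw [hset, Nat.card_Icc]
    omega
  · rw [Fintype.linearIndependent_iff]
    intro g hsum
    have hmono : ∀ i : Fin k, (∏ j ∈ cyc n k ((i : ℕ) + 1), (X - C (a j))).Monic :=
      fun i => monic_prod_of_monic _ _ (fun j _ => monic_X_sub_C (a j))
    have hne : ∀ (i : Fin k) (x : ℕ), 1 ≤ x → x ≤ n → x ∉ cyc n k ((i : ℕ) + 1) →
        (∏ j ∈ cyc n k ((i : ℕ) + 1), (X - C (a j))).eval (a x) ≠ 0 := by
      intro i x hx1 hxn hxno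
      rw [eval_prod]
      refine Finset.prod_ne_zero_iff.2 fun j hj => ?_
      have hj' := Finset.mem_Icc.1 (cyc_subset n k _ hn hj)
      simp only [eval_sub, eval_X, eval_C]
      intro hEq
      have hxj : x = j := ha (Set.mem_Icc.2 ⟨hx1, hxn⟩) (Set.mem_Icc.2 ⟨hj'.1, hj'.2⟩)
        (sub_eq_zero.1 hEq)
      exact hxno (hxj ▸ hj)
    have heval : ∀ x : ℕ,
        ∑ i : Fin k, g i * (∏ j ∈ cyc n k ((i : ℕ) + 1), (X - C (a j))).eval (a x) = 0 := by
      intro x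
      have := congrArg (Polynomial.eval (a x)) hsum
      simpa [eval_finset_sum] using this
    have hzero : ∀ m : ℕ, ∀ i : Fin k, 1 ≤ (i : ℕ) → k - (i : ℕ) ≤ m → g i = 0 := by
      intro m
      induction m with
      | zero => intro i _ him; have := i.isLt; omega
      | succ m ih =>
        intro i hi1 him
        have hik : (i : ℕ) < k := i.isLt
        have hsingle : ∑ i' : Fin k, g i' * (∏ j ∈ cyc n k ((i' : ℕ) + 1),
            (X - C (a j))).eval (a (i : ℕ))
            = g i * (∏ j ∈ cyc n k ((i : ℕ) + 1), (X - C (a j))).eval (a (i : ℕ)) := by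
          refine Fintype.sum_eq_single i fun i' hne' => ?_
          have hvne : (i' : ℕ) ≠ (i : ℕ) := fun h => hne' (Fin.ext h)
          rcases lt_or_gt_of_ne hvne with hlt | hgt
          · have hmem : (i : ℕ) ∈ cyc n k ((i' : ℕ) + 1) :=
              mem_cyc_self n k _ _ (by omega) (by omega) (by omega) (by omega)
            rw [eval_prod, Finset.prod_eq_zero hmem (by simp), mul_zero]
          · rw [ih i' (by omega) (by omega), zero_mul]
        have hs := heval (i : ℕ)
        rw [hsingle] at hs
        rcases mul_eq_zero.1 hs with h | h
        · exact h
        · exact absurd h (hne i (i : ℕ) hi1 (by omega) (not_mem_cyc n k _ hkn hi1))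
    intro i
    by_cases hi1 : 1 ≤ (i : ℕ)
    · exact hzero k i hi1 (by omega)
    · have hi0 : (i : ℕ) = 0 := by omega
      rw [Fintype.sum_eq_single i (fun b hb => by
        have : (b : ℕ) ≠ (i : ℕ) := fun h => hb (Fin.ext h)
        rw [hzero k b (by omega) (by omega), zero_smul])] at hsum
      rcases smul_eq_zero.1 hsum with h | h
      · exact h
      · exact absurd h (hmono i).ne_zero
end

section
/- Let k be even, 3 ≤ t < (1+√(8k))/2, and n = 2k − t. Write t = 4m + u with u ∈ {0,1,2,3}. Then ⌈k(k−1)/n⌉ = (k+r)/2 and ⌊k(k−1)/n⌋ = (k+r−2)/2, where r = t/2 if u=0, r = (t−1)/2 if u=1, r = (t+2)/2 if u=2, and r = (t+1)/2 if u=3. -/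
private lemma stmt12_aux (q : ℚ) (c : ℤ) (h1 : (c:ℚ) - 1 < q) (h2 : q < c) :
    (⌈q⌉:ℚ) = c ∧ (⌊q⌋:ℚ) = (c:ℚ) - 1 := by
  have hc : ⌈q⌉ = c := by
    rw [Int.ceil_eq_iff]
    exact ⟨h1, h2.le⟩
  have hf : ⌊q⌋ = c - 1 := by
    rw [Int.floor_eq_iff]
    push_cast
    constructor <;> linarith
  rw [hc, hf]; push_cast; exact ⟨rfl, rfl⟩

theorem stmt_12 (k t n m u : ℕ) (hke : Even k) (ht : 3 ≤ t)
    (hts : (t : ℝ) < (1 + Real.sqrt (8 * k)) / 2)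
    (hn : n = 2 * k - t) (hu : u < 4) (htmu : t = 4 * m + u) :
    (⌈((k:ℚ) * ((k:ℚ) - 1)) / n⌉ : ℚ) =
      ((k : ℚ) + (if u = 0 then (t:ℚ) / 2 else if u = 1 then ((t:ℚ) - 1) / 2
        else if u = 2 then ((t:ℚ) + 2) / 2 else ((t:ℚ) + 1) / 2)) / 2 ∧
    (⌊((k:ℚ) * ((k:ℚ) - 1)) / n⌋ : ℚ) =
      ((k : ℚ) + (if u = 0 then (t:ℚ) / 2 else if u = 1 then ((t:ℚ) - 1) / 2
        else if u = 2 then ((t:ℚ) + 2) / 2 else ((t:ℚ) + 1) / 2) - 2) / 2 := by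
  have ht3 : (3:ℝ) ≤ t := by exact_mod_cast ht
  have hsq : (2 * (t:ℝ) - 1)^2 < 8 * k :=
    (Real.lt_sqrt (by linarith)).mp (by linarith)
  have ht2 : t * t < 2 * k + t := by
    have h : (t:ℝ) * t < 2 * (k:ℝ) + t := by nlinarith
    exact_mod_cast h
  have htk : t < k := by nlinarith
  obtain ⟨j, hj⟩ := hke
  have hkq : (k:ℚ) = (j:ℚ) + j := by rw [hj]; push_cast; ring
  have hnq : (n:ℚ) = 2*(k:ℚ) - t := by
    rw [hn, Nat.cast_sub (by omega : t ≤ 2*k)]; push_cast; ring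
  have hnpos : (0:ℚ) < (n:ℚ) := by
    have : (t:ℚ) < (k:ℚ) := by exact_mod_cast htk
    rw [hnq]; linarith
  interval_cases u <;> norm_num
  · -- u = 0 : t = 4m, c = j + m
    have hm1 : 1 ≤ m := by omega
    have key : 2*m*m < j := by nlinarith [ht2]
    have hmq : 2*(m:ℚ)*m < j := by exact_mod_cast key
    have hm1q : (1:ℚ) ≤ m := by exact_mod_cast hm1
    have htq : (t:ℚ) = 4*(m:ℚ) := by rw [htmu]; push_cast; ring
    have h1 : (((j:ℤ)+m : ℤ):ℚ) - 1 < (k:ℚ)*((k:ℚ)-1)/(n:ℚ) := by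
      rw [lt_div_iff₀ hnpos, hnq, htq, hkq]; push_cast
      linarith [hmq, hm1q, mul_self_nonneg ((m:ℚ)-1)]
    have h2 : (k:ℚ)*((k:ℚ)-1)/(n:ℚ) < (((j:ℤ)+m : ℤ):ℚ) := by
      rw [div_lt_iff₀ hnpos, hnq, htq, hkq]; push_cast; linarith [hmq, hm1q]
    obtain ⟨hc, hf⟩ := stmt12_aux _ _ h1 h2
    rw [hc, hf]
    constructor <;> (rw [hkq, htq]; push_cast; ring)
  · -- u = 1 : t = 4m+1, c = j + m
    have hm1 : 1 ≤ m := by omega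
    have key : 4*m*m + m < j := by nlinarith [ht2]
    have hmq : 4*(m:ℚ)*m + m < j := by exact_mod_cast key
    have hm1q : (1:ℚ) ≤ m := by exact_mod_cast hm1
    have htq : (t:ℚ) = 4*(m:ℚ) + 1 := by rw [htmu]; push_cast; ring
    have h1 : (((j:ℤ)+m : ℤ):ℚ) - 1 < (k:ℚ)*((k:ℚ)-1)/(n:ℚ) := by
      rw [lt_div_iff₀ hnpos, hnq, htq, hkq]; push_cast
      linarith [hmq, hm1q, mul_self_nonneg ((m:ℚ)-1)]
    have h2 : (k:ℚ)*((k:ℚ)-1)/(n:ℚ) < (((j:ℤ)+m : ℤ):ℚ) := by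
      rw [div_lt_iff₀ hnpos, hnq, htq, hkq]; push_cast; linarith [hmq, hm1q]
    obtain ⟨hc, hf⟩ := stmt12_aux _ _ h1 h2
    rw [hc, hf]
    constructor <;> (rw [hkq, htq]; push_cast; ring)
  · -- u = 2 : t = 4m+2, c = j + m + 1
    have hm1 : 1 ≤ m := by omega
    have key : 8*m*m + 6*m + 1 < 2*j := by nlinarith [ht2]
    have hmq : 8*(m:ℚ)*m + 6*m + 1 < 2*j := by exact_mod_cast key
    have hm1q : (1:ℚ) ≤ m := by exact_mod_cast hm1
    have htq : (t:ℚ) = 4*(m:ℚ) + 2 := by rw [htmu]; push_cast; ring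
    have h1 : (((j:ℤ)+m+1 : ℤ):ℚ) - 1 < (k:ℚ)*((k:ℚ)-1)/(n:ℚ) := by
      rw [lt_div_iff₀ hnpos, hnq, htq, hkq]; push_cast
      linarith [hmq, hm1q, mul_self_nonneg ((m:ℚ)-1)]
    have h2 : (k:ℚ)*((k:ℚ)-1)/(n:ℚ) < (((j:ℤ)+m+1 : ℤ):ℚ) := by
      rw [div_lt_iff₀ hnpos, hnq, htq, hkq]; push_cast; linarith [hmq, hm1q]
    obtain ⟨hc, hf⟩ := stmt12_aux _ _ h1 h2
    rw [hc, hf]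
    constructor <;> (rw [hkq, htq]; push_cast; ring)
  · -- u = 3 : t = 4m+3, c = j + m + 1
    have key : 16*m*m + 20*m + 6 < 4*j := by nlinarith [ht2]
    have hmq : 16*(m:ℚ)*m + 20*m + 6 < 4*j := by exact_mod_cast key
    have hm0q : (0:ℚ) ≤ m := by positivity
    have hjq : (2:ℚ) ≤ j := by
      have : 2 ≤ j := by omega
      exact_mod_cast this
    have htq : (t:ℚ) = 4*(m:ℚ) + 3 := by rw [htmu]; push_cast; ring
    have h1 : (((j:ℤ)+m+1 : ℤ):ℚ) - 1 < (k:ℚ)*((k:ℚ)-1)/(n:ℚ) := by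
      rw [lt_div_iff₀ hnpos, hnq, htq, hkq]; push_cast
      linarith [hmq, hm0q, hjq, mul_self_nonneg (m:ℚ)]
    have h2 : (k:ℚ)*((k:ℚ)-1)/(n:ℚ) < (((j:ℤ)+m+1 : ℤ):ℚ) := by
      rw [div_lt_iff₀ hnpos, hnq, htq, hkq]; push_cast; linarith [hmq, hm0q, hjq]
    obtain ⟨hc, hf⟩ := stmt12_aux _ _ h1 h2
    rw [hc, hf]
    constructor <;> (rw [hkq, htq]; push_cast; ring)
end

section
/- Let k ≥ 2 and n = k + u with 1 ≤ u ≤ ⌊√k⌋, and let M be the k×n circulant 0-1 matrix whose i-th row has zeros exactly in columns [i, i+k−2] mod⁺ n. Then column j of M contains k−u−1 zeros if j ∈ [1, k−u−1], j zeros if j ∈ [k−u, k−1], and 2k−j−1 zeros if j ∈ [k, k+u]. -/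
theorem stmt_14 (k u n : ℕ) (hk : 2 ≤ k) (hu1 : 1 ≤ u) (hu2 : u ≤ Nat.sqrt k)
    (hn : n = k + u) :
    ∀ j ∈ Finset.Icc 1 n,
      ((Finset.Icc 1 k).filter fun i => j ∈ cyc n k i).card =
        if j ≤ k - u - 1 then k - u - 1
        else if j ≤ k - 1 then j
        else 2 * k - j - 1 := by
  intro j hj
  simp only [Finset.mem_Icc] at hj
  have hu' : u < k := lt_of_le_of_lt hu2 (Nat.sqrt_lt_self (by omega))
  have hn0 : 0 < n := by omega
  have hmem : ∀ i ∈ Finset.Icc 1 k,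
      (j ∈ cyc n k i ↔ ((i ≤ j ∧ j + 2 ≤ i + k) ∨ j + u + 2 ≤ i)) := by
    intro i hi
    simp only [Finset.mem_Icc] at hi
    simp only [cyc, modp, Finset.mem_image, Finset.mem_Icc]
    constructor
    · rintro ⟨a, ⟨ha1, ha2⟩, ha3⟩
      have hb : (a - 1) % n = j - 1 := by omega
      have hd := Nat.div_add_mod (a - 1) n
      have hqlt : (a - 1) / n < 2 := (Nat.div_lt_iff_lt_mul hn0).2 (by omega)
      generalize hgen : (a - 1) / n = q at hd hqlt
      obtain hq0 | hq1 : q = 0 ∨ q = 1 := by omega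
      · rw [hq0, Nat.mul_zero, Nat.zero_add] at hd
        omega
      · rw [hq1, Nat.mul_one] at hd
        omega
    · rintro (⟨h1, h2⟩ | h3)
      · refine ⟨j, ⟨h1, by omega⟩, ?_⟩
        have : (j - 1) % n = j - 1 := Nat.mod_eq_of_lt (by omega)
        omega
      · refine ⟨j + n, ⟨by omega, by omega⟩, ?_⟩
        have he : j + n - 1 = (j - 1) + n := by omega
        rw [he, Nat.add_mod_right]
        have : (j - 1) % n = j - 1 := Nat.mod_eq_of_lt (by omega)
        omega
  rw [Finset.filter_congr hmem]
  have hsplit : (Finset.Icc 1 k).filter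
      (fun i => (i ≤ j ∧ j + 2 ≤ i + k) ∨ j + u + 2 ≤ i)
      = Finset.Icc (max 1 (j + 2 - k)) (min k j) ∪ Finset.Icc (j + u + 2) k := by
    ext x
    simp only [Finset.mem_filter, Finset.mem_Icc, Finset.mem_union]
    omega
  have hdisj : Disjoint (Finset.Icc (max 1 (j + 2 - k)) (min k j))
      (Finset.Icc (j + u + 2) k) := by
    rw [Finset.disjoint_left]
    intro x hx hy
    simp only [Finset.mem_Icc] at hx hy
    omega
  rw [hsplit, Finset.card_union_of_disjoint hdisj, Nat.card_Icc, Nat.card_Icc]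
  split_ifs <;> omega
end

section
/- Let k ≥ 6 be even and n = 2k. Define S_i = [i, i+k−2] for 1 ≤ i ≤ k/2 and S_i = [k/2+i, 3k/2+i−2] mod⁺ n for k/2+1 ≤ i ≤ k, and for n distinct elements a_1,…,a_n of a field F let P_{S_i}(x) = ∏_{j∈S_i}(x − a_j). Then P_{S_1},…,P_{S_k} are linearly independent over F. -/
open Polynomial

/-!
Write `k = 2m`. The sets `S_1, …, S_m` are the intervals `[s, s + 2m - 2]` and `S_{m+1}, …, S_{2m}`
are cyclic intervals of the same length `2m - 1`. Each half is triangular: `a_{2m+s-1}` is a root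
of `P_{S_t}` for `s < t ≤ m` but not of `P_{S_s}`, and `a_{m+s-1}` is a root of `P_{S_t}` for
`m < t < s` but not of `P_{S_s}`; so each half is linearly independent. The two spans meet
trivially: everything in the first vanishes at `a_m, …, a_{2m-1}`, everything in the second at
`a_{3m}, …, a_{4m-1}`, and all these polynomials have degree `< 2m`.
-/

open Finset

section Triangular

variable {K M ι : Type*} [Field K] [AddCommGroup M] [Module K M] [LinearOrder ι] {v : ι → M}

theorem linearIndepOn_of_apply_eq_zero_of_lt (φ : ι → Module.Dual K M) (s : Finset ι)
    (hdiag : ∀ i ∈ s, φ i (v i) ≠ 0) (hlt : ∀ i ∈ s, ∀ j ∈ s, j < i → φ i (v j) = 0) :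
    LinearIndepOn K v s := by
  classical
  induction s using Finset.induction_on_max with
  | empty => simp
  | insert i s hmax ih =>
    have his : i ∉ s := fun h => lt_irrefl i (hmax i h)
    rw [coe_insert, linearIndepOn_insert (mod_cast his)]
    refine ⟨ih (fun j hj => hdiag j (mem_insert_of_mem hj))
      (fun j hj l hl => hlt j (mem_insert_of_mem hj) l (mem_insert_of_mem hl)), fun hi => ?_⟩
    refine hdiag i (mem_insert_self i s) (LinearMap.eqOn_span (g := 0) ?_ hi)
    rintro _ ⟨j, hj, rfl⟩
    exact hlt i (mem_insert_self i s) j (mem_insert_of_mem hj) (hmax j hj)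

theorem linearIndepOn_of_apply_eq_zero_of_gt (φ : ι → Module.Dual K M) (s : Finset ι)
    (hdiag : ∀ i ∈ s, φ i (v i) ≠ 0) (hgt : ∀ i ∈ s, ∀ j ∈ s, i < j → φ i (v j) = 0) :
    LinearIndepOn K v s :=
  linearIndepOn_of_apply_eq_zero_of_lt (ι := ιᵒᵈ) φ s hdiag hgt

end Triangular

namespace Polynomial

variable {F ι κ : Type*} [Field F] {v : ι → F[X]}

theorem eval_eq_zero_of_mem_span {s : Set ι} {x : F} (h : ∀ i ∈ s, (v i).eval x = 0)
    {p : F[X]} (hp : p ∈ Submodule.span F (v '' s)) : p.eval x = 0 :=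
  LinearMap.eqOn_span (f := leval x) (g := 0) (by rintro _ ⟨i, hi, rfl⟩; exact h i hi) hp

theorem disjoint_span_of_eval_eq_zero [DecidableEq κ] {s t : Set ι} {n : ℕ}
    (hdeg : ∀ i ∈ s ∪ t, (v i).degree < n) {x : κ → F} {Z₁ Z₂ : Finset κ}
    (hx : Set.InjOn x ↑(Z₁ ∪ Z₂)) (hcard : n ≤ #(Z₁ ∪ Z₂))
    (hs : ∀ z ∈ Z₁, ∀ i ∈ s, (v i).eval (x z) = 0)
    (ht : ∀ z ∈ Z₂, ∀ i ∈ t, (v i).eval (x z) = 0) :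
    Disjoint (Submodule.span F (v '' s)) (Submodule.span F (v '' t)) := by
  have hspan : Submodule.span F (v '' (s ∪ t)) ≤ degreeLT F n := by
    rw [Submodule.span_le]
    rintro _ ⟨i, hi, rfl⟩
    exact mem_degreeLT.mpr (hdeg i hi)
  rw [Submodule.disjoint_def]
  intro p hps hpt
  have hdeg_p : p.degree < n :=
    mem_degreeLT.mp (hspan (Submodule.span_mono (Set.image_mono Set.subset_union_left) hps))
  refine eq_zero_of_degree_lt_of_eval_index_eq_zero _ hx (hdeg_p.trans_le (mod_cast hcard)) ?_
  intro z hz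
  rcases mem_union.mp hz with hz | hz
  · exact eval_eq_zero_of_mem_span (hs z hz) hps
  · exact eval_eq_zero_of_mem_span (ht z hz) hpt

theorem eval_prod_X_sub_C_eq_zero {a : κ → F} {S : Finset κ} {j : κ} (hj : j ∈ S) :
    (∏ l ∈ S, (X - C (a l))).eval (a j) = 0 := by
  rw [eval_prod]
  exact prod_eq_zero hj (by simp)

theorem eval_prod_X_sub_C_ne_zero {a : κ → F} {S : Finset κ} {T : Set κ} (ha : Set.InjOn a T)
    (hST : ↑S ⊆ T) {j : κ} (hjT : j ∈ T) (hjS : j ∉ S) :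
    (∏ l ∈ S, (X - C (a l))).eval (a j) ≠ 0 := by
  rw [eval_prod, prod_ne_zero_iff]
  intro l hl
  rw [eval_sub, eval_X, eval_C, sub_ne_zero]
  intro hal
  exact hjS (ha hjT (hST hl) hal ▸ hl)

end Polynomial

section Construction

variable {m s : ℕ}

theorem con1_two_mul_of_le (hs : s ≤ m) : con1 (2 * m) s = Icc s (s + 2 * m - 2) := by
  rw [con1, if_pos (by omega)]

theorem mem_con1_two_mul_of_lt (hs : m < s) (hs' : s ≤ 2 * m) {j : ℕ} :
    j ∈ con1 (2 * m) s ↔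
      (m + s ≤ j ∧ j ≤ 3 * m + s - 2 ∧ j ≤ 4 * m) ∨ (1 ≤ j ∧ j + 4 * m + 2 ≤ 3 * m + s) := by
  have hk : 2 * m / 2 = m := by omega
  have hk' : 3 * (2 * m) / 2 = 3 * m := by omega
  simp only [con1, hk, hk', if_neg (show ¬s ≤ m by omega), mem_image, mem_Icc, modp]
  constructor
  · rintro ⟨b, hb, rfl⟩
    -- the residue of `b - 1` wraps around at most once
    rcases le_or_gt b (2 * (2 * m)) with hb' | hb'
    · rw [Nat.mod_eq_of_lt (by omega)]; omega
    · rw [Nat.mod_eq_sub_mod (by omega), Nat.mod_eq_of_lt (by omega)]; omega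
  · rintro (h | h)
    · exact ⟨j, by omega, by rw [Nat.mod_eq_of_lt (by omega)]; omega⟩
    · exact ⟨j + 4 * m, by omega, by
        rw [Nat.mod_eq_sub_mod (by omega), Nat.mod_eq_of_lt (by omega)]; omega⟩

theorem coe_con1_two_mul_subset (hs : 1 ≤ s) (hs' : s ≤ 2 * m) :
    (con1 (2 * m) s : Set ℕ) ⊆ Set.Icc 1 (2 * (2 * m)) := by
  intro j hj
  rw [mem_coe] at hj
  rw [Set.mem_Icc]
  rcases le_or_gt s m with h | h
  · rw [con1_two_mul_of_le h, mem_Icc] at hj; omega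
  · rw [mem_con1_two_mul_of_lt h hs'] at hj; omega

theorem card_con1_two_mul_lt (hs : 1 ≤ s) (hs' : s ≤ 2 * m) : #(con1 (2 * m) s) < 2 * m := by
  rcases le_or_gt s m with h | h
  · rw [con1_two_mul_of_le h, Nat.card_Icc]; omega
  · rw [con1, if_neg (by omega)]
    exact card_image_le.trans_lt (by rw [Nat.card_Icc]; omega)

variable {F : Type*} [Field F]

/-- The polynomial `P_{S_s}` of the paper. -/
noncomputable def con1Poly (a : ℕ → F) (k s : ℕ) : F[X] := ∏ j ∈ con1 k s, (X - C (a j))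

variable {a : ℕ → F}

theorem degree_con1Poly_lt (hs : 1 ≤ s) (hs' : s ≤ 2 * m) :
    (con1Poly a (2 * m) s).degree < (2 * m : ℕ) := by
  refine degree_le_natDegree.trans_lt ?_
  rw [con1Poly, natDegree_finsetProd_X_sub_C_eq_card]
  exact_mod_cast card_con1_two_mul_lt hs hs'

theorem eval_con1Poly_ne_zero (ha : Set.InjOn a (Set.Icc 1 (2 * (2 * m)))) (hs : 1 ≤ s)
    (hs' : s ≤ 2 * m) {j : ℕ} (hj : j ∈ Set.Icc 1 (2 * (2 * m))) (hjs : j ∉ con1 (2 * m) s) :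
    (con1Poly a (2 * m) s).eval (a j) ≠ 0 :=
  eval_prod_X_sub_C_ne_zero ha (coe_con1_two_mul_subset hs hs') hj hjs

theorem linearIndepOn_con1Poly_Icc_one (ha : Set.InjOn a (Set.Icc 1 (2 * (2 * m)))) :
    LinearIndepOn F (con1Poly a (2 * m)) ↑(Icc 1 m) := by
  refine linearIndepOn_of_apply_eq_zero_of_gt (fun s => leval (a (2 * m + s - 1))) _
    (fun s hs => ?_) (fun s hs s' hs' hss' => ?_) <;> rw [mem_Icc] at hs
  · refine eval_con1Poly_ne_zero ha (by omega) (by omega) ⟨by omega, by omega⟩ ?_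
    rw [con1_two_mul_of_le hs.2, mem_Icc]; omega
  · rw [mem_Icc] at hs'
    refine eval_prod_X_sub_C_eq_zero ?_
    rw [con1_two_mul_of_le hs'.2, mem_Icc]; omega

theorem linearIndepOn_con1Poly_Icc_succ (ha : Set.InjOn a (Set.Icc 1 (2 * (2 * m)))) :
    LinearIndepOn F (con1Poly a (2 * m)) ↑(Icc (m + 1) (2 * m)) := by
  refine linearIndepOn_of_apply_eq_zero_of_lt (fun s => leval (a (m + s - 1))) _
    (fun s hs => ?_) (fun s hs s' hs' hss' => ?_) <;> rw [mem_Icc] at hs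
  · refine eval_con1Poly_ne_zero ha (by omega) (by omega) ⟨by omega, by omega⟩ ?_
    rw [mem_con1_two_mul_of_lt (by omega) hs.2]; omega
  · rw [mem_Icc] at hs'
    refine eval_prod_X_sub_C_eq_zero ?_
    rw [mem_con1_two_mul_of_lt (by omega) hs'.2]; omega

theorem disjoint_span_con1Poly (ha : Set.InjOn a (Set.Icc 1 (2 * (2 * m)))) :
    Disjoint (Submodule.span F (con1Poly a (2 * m) '' ↑(Icc 1 m)))
      (Submodule.span F (con1Poly a (2 * m) '' ↑(Icc (m + 1) (2 * m)))) := by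
  refine disjoint_span_of_eval_eq_zero (n := 2 * m) (x := a)
    (Z₁ := Ico m (2 * m)) (Z₂ := Ico (3 * m) (4 * m)) ?_ ?_ ?_ ?_ ?_
  · intro s hs
    simp only [Set.mem_union, mem_coe, mem_Icc] at hs
    exact degree_con1Poly_lt (by omega) (by omega)
  · refine ha.mono ?_
    intro j hj
    simp only [coe_union, coe_Ico, Set.mem_union, Set.mem_Ico, Set.mem_Icc] at hj ⊢
    omega
  · rw [card_union_of_disjoint (disjoint_left.mpr fun j h h' => by
      rw [mem_Ico] at h h'; omega), Nat.card_Ico, Nat.card_Ico]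
    omega
  · intro j hj s hs
    rw [mem_coe, mem_Icc] at hs
    rw [mem_Ico] at hj
    refine eval_prod_X_sub_C_eq_zero ?_
    rw [con1_two_mul_of_le hs.2, mem_Icc]; omega
  · intro j hj s hs
    rw [mem_coe, mem_Icc] at hs
    rw [mem_Ico] at hj
    refine eval_prod_X_sub_C_eq_zero ?_
    rw [mem_con1_two_mul_of_lt (by omega) hs.2]; omega

end Construction

theorem stmt_16_general {F : Type*} [Field F] (k : ℕ) (hke : Even k)
    (a : ℕ → F) (ha : Set.InjOn a (Set.Icc 1 (2 * k))) :
    LinearIndependent F (fun i : Fin k => ∏ j ∈ con1 k ((i : ℕ) + 1), (X - C (a j))) := by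
  obtain ⟨m, rfl⟩ := even_iff_two_dvd.mp hke
  have hrange : Set.range (fun i : Fin (2 * m) => (i : ℕ) + 1) =
      ↑(Icc 1 m) ∪ ↑(Icc (m + 1) (2 * m)) := by
    ext j
    simp only [Set.mem_range, Set.mem_union, mem_coe, mem_Icc]
    exact ⟨fun ⟨i, hi⟩ => by omega, fun hj => ⟨⟨j - 1, by omega⟩, by simp only; omega⟩⟩
  have hindep := (linearIndepOn_con1Poly_Icc_one ha).union (linearIndepOn_con1Poly_Icc_succ ha)
    (disjoint_span_con1Poly ha)
  rw [← hrange, linearIndepOn_range_iff (fun i j h => Fin.ext (by simpa using h))] at hindep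
  exact hindep

theorem stmt_16 {F : Type*} [Field F] (k : ℕ) (hk : 6 ≤ k) (hke : Even k)
    (a : ℕ → F) (ha : Set.InjOn a (Set.Icc 1 (2 * k))) :
    LinearIndependent F (fun i : Fin k => ∏ j ∈ con1 k ((i : ℕ) + 1), (X - C (a j))) :=
  stmt_16_general k hke a ha
end

section
/- Let k ≥ 5 with k odd, and suppose there exist sets S_1,…,S_k ⊆ {1,…,2k} with |S_i| = k−1 such that each element of {1,…,2k} lies in at most ⌈k(k−1)/(2k)⌉ = ⌈(k−1)/2⌉ of the sets, and such that for some i ∈ {1,…,k−1}, |S_1∩⋯∩S_i| = k−i and |S_{i+1}∩⋯∩S_k| = i. Then a contradiction follows; i.e., no such set system exists when n = 2k and k is odd. -/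
theorem stmt_19 (k : ℕ) (hk : 5 ≤ k) (hko : Odd k)
    (S : Fin k → Finset (Fin (2 * k))) (hcard : ∀ i, (S i).card = k - 1)
    (hbal : ∀ j : Fin (2 * k),
      ((Finset.univ.filter fun i => j ∈ S i).card : ℤ) ≤ ⌈((k:ℚ) * ((k:ℚ) - 1)) / (2 * k)⌉)
    (hsep : ∃ i, 1 ≤ i ∧ i ≤ k - 1 ∧
      (Finset.univ.filter fun j : Fin (2 * k) => ∀ l : Fin k, (l : ℕ) < i → j ∈ S l).card
        = k - i ∧
      (Finset.univ.filter fun j : Fin (2 * k) => ∀ l : Fin k, i ≤ (l : ℕ) → j ∈ S l).card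
        = i) :
    False := by
  obtain ⟨i, hi1, hik, hA, hB⟩ := hsep
  obtain ⟨m, hm⟩ := hko
  have hk0 : (k : ℚ) ≠ 0 := by positivity
  have hceil : ⌈((k:ℚ) * ((k:ℚ) - 1)) / (2 * k)⌉ = (m : ℤ) := by
    have hval : ((k:ℚ) * ((k:ℚ) - 1)) / (2 * k) = (m : ℚ) := by
      field_simp
      push_cast [hm]
      ring
    rw [hval, Int.ceil_natCast]
  have hbal' : ∀ j : Fin (2 * k), (Finset.univ.filter fun i => j ∈ S i).card ≤ m := by
    intro j
    have := hbal j
    rw [hceil] at this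
    exact_mod_cast this
  have hik' : i < k := by omega
  -- element in the first intersection
  have hAne : (Finset.univ.filter fun j : Fin (2 * k) =>
      ∀ l : Fin k, (l : ℕ) < i → j ∈ S l).Nonempty := by
    rw [← Finset.card_pos, hA]; omega
  obtain ⟨jA, hjA⟩ := hAne
  rw [Finset.mem_filter] at hjA
  have hBne : (Finset.univ.filter fun j : Fin (2 * k) =>
      ∀ l : Fin k, i ≤ (l : ℕ) → j ∈ S l).Nonempty := by
    rw [← Finset.card_pos, hB]; omega
  obtain ⟨jB, hjB⟩ := hBne
  rw [Finset.mem_filter] at hjB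
  have h1 : i ≤ (Finset.univ.filter fun l => jA ∈ S l).card := by
    have hsub : Finset.Iio (⟨i, hik'⟩ : Fin k) ⊆ Finset.univ.filter fun l => jA ∈ S l := by
      intro l hl
      rw [Finset.mem_Iio, Fin.lt_def] at hl
      exact Finset.mem_filter.mpr ⟨Finset.mem_univ _, hjA.2 l hl⟩
    have := Finset.card_le_card hsub
    rwa [Fin.card_Iio] at this
  have h2 : k - i ≤ (Finset.univ.filter fun l => jB ∈ S l).card := by
    have hsub : Finset.Ici (⟨i, hik'⟩ : Fin k) ⊆ Finset.univ.filter fun l => jB ∈ S l := by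
      intro l hl
      rw [Finset.mem_Ici, Fin.le_def] at hl
      exact Finset.mem_filter.mpr ⟨Finset.mem_univ _, hjB.2 l hl⟩
    have := Finset.card_le_card hsub
    rwa [Fin.card_Ici] at this
  have := hbal' jA
  have := hbal' jB
  omega
end
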